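/- Let d be a prime, n ≥ 1, and Γ a symmetric n×n matrix over ZMod d with zero diagonal. Suppose S ⊆ Fin n is an independent set of the associated weighted graph, i.e., Γ u v = 0 for all u, v ∈ S. Then the Schmidt rank of the graph state satisfies r(ψ_Γ) ≤ d ^ (n − |S|). In particular, if the weighted graph is three-colorable with color classes of sizes n₁ ≤ n₂ ≤ n₃, then the graph state has a product decomposition with at most d^(n₁+n₂) terms, so E_S(ψ_Γ) ≤ n₁ + n₂. -/

import Mathlib

/-- The graph-state amplitude function of an adjacency matrix `Γ` over `ZMod d`. -/
noncomputable def graphState (d n : ℕ) (ω : ℂ) (Γ : Matrix (Fin n) (Fin n) (ZMod d)) :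
    (Fin n → ZMod d) → ℂ := fun x =>
  (((d : ℝ) ^ (-(n : ℝ) / 2) : ℝ) : ℂ) *
    ω ^ (∑ u : Fin n, ∑ v : Fin n, if u < v then Γ u v * x u * x v else 0).val

/-- The Schmidt rank of `ψ : (Fin n → ZMod d) → ℂ`: the least `R` such that `ψ` is a
sum of `R` product functions. -/
noncomputable def schmidtRank {d n : ℕ} (ψ : (Fin n → ZMod d) → ℂ) : ℕ :=
  sInf {R : ℕ | ∃ f : Fin R → Fin n → ZMod d → ℂ, ∀ x, ψ x = ∑ i, ∏ j, f i j (x j)}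

/-! Write `x = x_S + x_T` with `T = Sᶜ`. Since `S` is independent and `Γ` is symmetric with zero
diagonal, the phase `Q(x) = ∑_{u<v} Γ u v x u x v` polarizes to `Q(x) = Q(x_T) + x_S ⬝ Γ x_T`,
which for fixed `x_T` is linear in the coordinates on `S`; so `ψ_Γ` restricted to each of the
`d ^ |T|` values of `x_T` is a product over the vertices, and pinning `x_T` by indicator factors
writes `ψ_Γ` as a sum of `d ^ |T|` products. For a proper 3-coloring, take `S` to be the largest
color class. -/

theorem AddChar.map_sum {A M ι : Type*} [AddCommMonoid A] [CommMonoid M] (ψ : AddChar A M)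
    (s : Finset ι) (f : ι → A) : ψ (∑ i ∈ s, f i) = ∏ i ∈ s, ψ (f i) := by
  induction s using Finset.cons_induction with
  | empty => simp
  | cons i s _ ih => rw [Finset.sum_cons, Finset.prod_cons, map_add_eq_mul, ih]

open Finset Matrix

section SchmidtRank

variable {d n : ℕ}

theorem schmidtRank_le_card_of_eq_sum {ι : Type*} (ψ : (Fin n → ZMod d) → ℂ) (s : Finset ι)
    (f : ι → Fin n → ZMod d → ℂ) (h : ∀ x, ψ x = ∑ i ∈ s, ∏ j, f i j (x j)) :
    schmidtRank ψ ≤ s.card := by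
  refine Nat.sInf_le ⟨fun k j => f (s.equivFin.symm k) j, fun x => ?_⟩
  rw [h x, ← sum_coe_sort s, ← s.equivFin.symm.sum_comp]

theorem schmidtRank_le_pow_card_of_eq_prod [NeZero d] (ψ : (Fin n → ZMod d) → ℂ)
    (T : Finset (Fin n)) (g : (Fin n → ZMod d) → Fin n → ZMod d → ℂ)
    (h : ∀ x, ψ x = ∏ j, g (T.piecewise x 0) j (x j)) :
    schmidtRank ψ ≤ d ^ T.card := by
  set P := Fintype.piFinset fun j : Fin n => if j ∈ T then (univ : Finset (ZMod d)) else {0}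
  have hP : P.card = d ^ T.card := by
    simp only [P, Fintype.card_piFinset, apply_ite card, card_univ, ZMod.card, card_singleton]
    rw [prod_ite_mem, univ_inter, prod_const]
  rw [← hP]
  refine schmidtRank_le_card_of_eq_sum ψ P
    (fun y j t => if j ∈ T ∧ t ≠ y j then 0 else g y j t) fun x => ?_
  have hx : T.piecewise x 0 ∈ P := by
    simp only [P, Fintype.mem_piFinset]
    intro j
    by_cases hj : j ∈ T <;> simp [hj]
  rw [sum_eq_single_of_mem _ hx, h x]
  · refine prod_congr rfl fun j _ => ?_
    by_cases hj : j ∈ T <;> simp [hj]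
  · intro y hy hne
    obtain ⟨j, hj⟩ := Function.ne_iff.mp hne
    have hyj := Fintype.mem_piFinset.mp hy j
    have hjT : j ∈ T := by
      by_contra hjT
      simp_all
    refine prod_eq_zero (mem_univ j) (if_pos ⟨hjT, fun hxy => hj ?_⟩)
    simp [hjT, hxy]

end SchmidtRank

section GraphPhase

variable {ι R : Type*} [Fintype ι] [LinearOrder ι] [CommRing R]

def graphPhase (Γ : Matrix ι ι R) (x : ι → R) : R :=
  ∑ u, ∑ v, if u < v then Γ u v * x u * x v else 0

theorem graphPhase_add {Γ : Matrix ι ι R} (hΓsymm : Γ.IsSymm) (hΓdiag : ∀ u, Γ u u = 0)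
    (x y : ι → R) :
    graphPhase Γ (x + y) = graphPhase Γ x + graphPhase Γ y + x ⬝ᵥ Γ *ᵥ y := by
  have hswap : (∑ u, ∑ v, if u < v then Γ u v * y u * x v else 0) =
      ∑ u, ∑ v, if v < u then Γ u v * x u * y v else 0 := by
    rw [sum_comm]
    refine sum_congr rfl fun u _ => sum_congr rfl fun v _ => ?_
    rw [hΓsymm.apply u v, mul_right_comm]
  have hcross : ∀ u v, ((if u < v then Γ u v * x u * y v else 0) +
      if v < u then Γ u v * x u * y v else 0) = Γ u v * x u * y v := by
    intro u v
    rcases lt_trichotomy u v with huv | rfl | huv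
    · simp [huv, huv.not_gt]
    · simp [hΓdiag]
    · simp [huv, huv.not_gt]
  calc graphPhase Γ (x + y)
      = graphPhase Γ x + graphPhase Γ y + ((∑ u, ∑ v, if u < v then Γ u v * x u * y v else 0) +
          ∑ u, ∑ v, if u < v then Γ u v * y u * x v else 0) := by
        simp only [graphPhase, ← sum_add_distrib, Pi.add_apply]
        refine sum_congr rfl fun u _ => sum_congr rfl fun v _ => ?_
        split_ifs <;> ring
    _ = graphPhase Γ x + graphPhase Γ y + x ⬝ᵥ Γ *ᵥ y := by
        simp only [hswap, ← sum_add_distrib, hcross, dotProduct, mulVec, mul_sum]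
        congr 1
        refine sum_congr rfl fun u _ => sum_congr rfl fun v _ => ?_
        ring

theorem graphPhase_piecewise_eq_zero {Γ : Matrix ι ι R} {S : Finset ι}
    [DecidablePred (· ∈ S)] (hS : ∀ u ∈ S, ∀ v ∈ S, Γ u v = 0) (x : ι → R) :
    graphPhase Γ (S.piecewise x 0) = 0 := by
  refine sum_eq_zero fun u _ => sum_eq_zero fun v _ => ?_
  by_cases hu : u ∈ S <;> by_cases hv : v ∈ S <;> simp [hu, hv, hS]

theorem graphPhase_eq_add_dotProduct {Γ : Matrix ι ι R} (hΓsymm : Γ.IsSymm)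
    (hΓdiag : ∀ u, Γ u u = 0) {S : Finset ι} (hS : ∀ u ∈ S, ∀ v ∈ S, Γ u v = 0)
    [DecidableEq ι] (x : ι → R) :
    graphPhase Γ x =
      graphPhase Γ (Sᶜ.piecewise x 0) + S.piecewise x 0 ⬝ᵥ Γ *ᵥ Sᶜ.piecewise x 0 := by
  have hsplit : S.piecewise x 0 + Sᶜ.piecewise x 0 = x := by
    ext j
    by_cases hj : j ∈ S <;> simp [hj]
  conv_lhs => rw [← hsplit]
  rw [graphPhase_add hΓsymm hΓdiag, graphPhase_piecewise_eq_zero hS, zero_add]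

end GraphPhase

theorem graphState_apply (d n : ℕ) (ω : ℂ) (Γ : Matrix (Fin n) (Fin n) (ZMod d))
    (x : Fin n → ZMod d) :
    graphState d n ω Γ x = (((d : ℝ) ^ (-(n : ℝ) / 2) : ℝ) : ℂ) * ω ^ (graphPhase Γ x).val :=
  rfl

theorem schmidtRank_graphState_le {d n : ℕ} (hd : d ≠ 0) (hn : 1 ≤ n) {ω : ℂ} (hω : ω ^ d = 1)
    {Γ : Matrix (Fin n) (Fin n) (ZMod d)} (hΓsymm : Γ.IsSymm) (hΓdiag : ∀ u, Γ u u = 0)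
    {S : Finset (Fin n)} (hS : ∀ u ∈ S, ∀ v ∈ S, Γ u v = 0) :
    schmidtRank (graphState d n ω Γ) ≤ d ^ (n - S.card) := by
  have : NeZero d := ⟨hd⟩
  set χ := AddChar.zmodChar d hω
  set C : ℂ := (((d : ℝ) ^ (-(n : ℝ) / 2) : ℝ) : ℂ)
  have hcard : n - S.card = Sᶜ.card := by rw [card_compl, Fintype.card_fin]
  rw [hcard]
  -- the normalization and the phase of `x_T` go into the factor of vertex `0`
  refine schmidtRank_le_pow_card_of_eq_prod _ Sᶜ (fun y j t =>
    (if j = ⟨0, hn⟩ then C * χ (graphPhase Γ y) else 1) *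
      χ (S.piecewise (fun _ => t) 0 j * (Γ *ᵥ y) j))
    fun x => ?_
  rw [prod_mul_distrib, prod_ite_eq', if_pos (mem_univ _), graphState_apply,
    graphPhase_eq_add_dotProduct hΓsymm hΓdiag hS x, ← AddChar.zmodChar_apply hω,
    AddChar.map_add_eq_mul, dotProduct, AddChar.map_sum, ← mul_assoc]
  rfl

/-- If `S` is an independent set of the weighted graph of `Γ`, then the Schmidt rank of
the graph state is at most `d ^ (n - |S|)`. In particular, if the graph is
three-colorable with color classes of sizes `n₁ ≤ n₂ ≤ n₃`, the graph state has a
product decomposition with at most `d^(n₁+n₂)` terms, so `E_S ≤ n₁ + n₂`. -/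
theorem schmidtRank_le_of_independent
    (d n : ℕ) (hd : Nat.Prime d) (hn : 1 ≤ n)
    (ω : ℂ) (hω : IsPrimitiveRoot ω d)
    (Γ : Matrix (Fin n) (Fin n) (ZMod d)) (hΓsymm : Γ.IsSymm) (hΓdiag : ∀ u, Γ u u = 0)
    (S : Finset (Fin n)) (hS : ∀ u ∈ S, ∀ v ∈ S, Γ u v = 0) :
    schmidtRank (graphState d n ω Γ) ≤ d ^ (n - S.card) ∧
      ∀ (c : Fin n → Fin 3) (n₁ n₂ n₃ : ℕ),
        (∀ u v : Fin n, c u = c v → Γ u v = 0) →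
        n₁ ≤ n₂ → n₂ ≤ n₃ →
        Multiset.map (fun i => (Finset.univ.filter fun v => c v = i).card)
            (Finset.univ : Finset (Fin 3)).val = {n₁, n₂, n₃} →
        schmidtRank (graphState d n ω Γ) ≤ d ^ (n₁ + n₂) := by
  refine ⟨schmidtRank_graphState_le hd.ne_zero hn hω.pow_eq_one hΓsymm hΓdiag hS, ?_⟩
  intro c n₁ n₂ n₃ hc _ _ hsizes
  have hsum : n₁ + n₂ + n₃ = n := by
    have := congrArg Multiset.sum hsizes
    rw [← sum_eq_multiset_sum, ← card_eq_sum_card_fiberwise fun v _ => mem_univ (c v)] at this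
    simp_all [add_assoc]
  have hn₃ : n₃ ∈ Multiset.map (fun i => (univ.filter fun v => c v = i).card) univ.val := by
    simp [hsizes]
  obtain ⟨i, -, hi⟩ := Multiset.mem_map.mp hn₃
  have hclass := schmidtRank_graphState_le hd.ne_zero hn hω.pow_eq_one hΓsymm hΓdiag
    (S := univ.filter fun v => c v = i) fun u hu v hv => hc u v (by simp_all)
  rwa [hi, show n - n₃ = n₁ + n₂ by omega] at hclass
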